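/- With the rank-one dressing data below, for every λ ∈ ℂ with λ² ≠ k² and λ² ≠ conj(k)², one has σ₂·D(λ)ᵀ·σ₂ = ((λ²−conj(k)²)/(λ²−k²))·E(λ). -/

import Mathlib

open Matrix Complex ComplexConjugate

noncomputable section

abbrev M2 := Matrix (Fin 2) (Fin 2) ℂ
abbrev Vec2 := Matrix (Fin 2) (Fin 1) ℂ

def sigma3 : M2 := !![1, 0; 0, -1]
def sigma2 : M2 := !![0, -Complex.I; Complex.I, 0]

/-- α = (k|y₁|² + k̄|y₂|²)⁻¹ -/
def alph (k : ℂ) (y : Vec2) : ℂ :=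
  (k * (Complex.normSq (y 0 0) : ℂ) + conj k * (Complex.normSq (y 1 0) : ℂ))⁻¹

/-- z = ((k²−k̄²)/2)·diag(α,ᾱ)·y -/
def zvec (k : ℂ) (y : Vec2) : Vec2 :=
  ((k ^ 2 - (conj k) ^ 2) / 2) • (!![alph k y, 0; 0, conj (alph k y)] * y)

/-- B = |z⟩⟨y| -/
def Bmat (k : ℂ) (y : Vec2) : M2 := zvec k y * yᴴ

/-- D(λ) = I + B/(λ−k) − σ₃Bσ₃/(λ+k) -/
def Dfun (k : ℂ) (y : Vec2) (lam : ℂ) : M2 :=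
  1 + (lam - k)⁻¹ • Bmat k y - (lam + k)⁻¹ • (sigma3 * Bmat k y * sigma3)

/-- E(λ) = I + B†/(λ−k̄) − σ₃B†σ₃/(λ+k̄) -/
def Efun (k : ℂ) (y : Vec2) (lam : ℂ) : M2 :=
  1 + (lam - conj k)⁻¹ • (Bmat k y)ᴴ - (lam + conj k)⁻¹ • (sigma3 * (Bmat k y)ᴴ * sigma3)

/-!
Up to conjugation by σ₂, transposition is the adjugate: σ₂ Mᵀ σ₂ = adj M for 2 × 2 matrices. After
multiplication by λ² − k², both adj D(λ) and ((λ² − k̄²)/(λ² − k²)) E(λ) are quadratic polynomials in λ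
with leading term λ² I. Comparing the other coefficients, the identity holds as soon as B and B† have
opposite off-diagonal entries, which holds because (k² − k̄²)/2 is purely imaginary, and two diagonal
relations, which are α (k|y₁|² + k̄|y₂|²) = 1 and its conjugate.
-/

section Dressing

variable {K : Type*} [Field K]

def dressingFactor (k : K) (B : Matrix (Fin 2) (Fin 2) K) (lam : K) : Matrix (Fin 2) (Fin 2) K :=
  1 + (lam - k)⁻¹ • B - (lam + k)⁻¹ • (!![1, 0; 0, -1] * B * !![1, 0; 0, -1])

/-- The coefficients of `λ` and `1` in the quadratic matrix polynomials
`(λ² - k²) • adjugate (dressingFactor k B λ)` and `(λ² - κ²) • dressingFactor κ C λ` agree. -/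
def AdjugateCompatible (k κ : K) (B C : Matrix (Fin 2) (Fin 2) K) : Prop :=
  C 0 1 = -B 0 1 ∧ C 1 0 = -B 1 0 ∧
    2 * (k * B 1 1 - κ * C 0 0) = k ^ 2 - κ ^ 2 ∧ 2 * (k * B 0 0 - κ * C 1 1) = k ^ 2 - κ ^ 2

theorem diagSign_mul_mul_diagSign (B : Matrix (Fin 2) (Fin 2) K) :
    !![1, 0; 0, -1] * B * !![1, 0; 0, -1] = !![B 0 0, -B 0 1; -B 1 0, B 1 1] := by
  rw [eta_fin_two B]
  simp

theorem adjugate_dressingFactor {k κ lam : K} (hk : lam ^ 2 ≠ k ^ 2) (hκ : lam ^ 2 ≠ κ ^ 2)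
    {B C : Matrix (Fin 2) (Fin 2) K} (h : AdjugateCompatible k κ B C) :
    adjugate (dressingFactor k B lam) =
      ((lam ^ 2 - κ ^ 2) / (lam ^ 2 - k ^ 2)) • dressingFactor κ C lam := by
  obtain ⟨h01, h10, h00, h11⟩ := h
  have hmk : lam - k ≠ 0 := fun h => hk (by rw [sub_eq_zero.mp h])
  have hpk : lam + k ≠ 0 := fun h => hk (by rw [eq_neg_of_add_eq_zero_left h]; ring)
  have hmκ : lam - κ ≠ 0 := fun h => hκ (by rw [sub_eq_zero.mp h])
  have hpκ : lam + κ ≠ 0 := fun h => hκ (by rw [eq_neg_of_add_eq_zero_left h]; ring)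
  rw [dressingFactor, dressingFactor, diagSign_mul_mul_diagSign, diagSign_mul_mul_diagSign]
  ext i j
  fin_cases i <;> fin_cases j <;> simp [adjugate_fin_two, h01, h10] <;> field_simp
  · linear_combination (lam ^ 2 - k ^ 2) * (lam ^ 2 - κ ^ 2) * h00
  · ring
  · ring
  · linear_combination (lam ^ 2 - k ^ 2) * (lam ^ 2 - κ ^ 2) * h11

end Dressing

theorem sigma2_mul_transpose_mul_sigma2 (M : M2) : sigma2 * Mᵀ * sigma2 = adjugate M := by
  ext i j
  simp only [Matrix.mul_apply, Fin.sum_univ_two, transpose_apply]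
  fin_cases i <;> fin_cases j <;> simp [sigma2, adjugate_fin_two, mul_right_comm _ _ I]

theorem Bmat_apply (k : ℂ) (y : Vec2) (i j : Fin 2) :
    Bmat k y i j =
      (k ^ 2 - conj k ^ 2) / 2 * ![alph k y, conj (alph k y)] i * y i 0 * conj (y j 0) := by
  simp only [Bmat, zvec, Matrix.mul_apply, Fin.sum_univ_two, Fin.sum_univ_one, Matrix.smul_apply,
    conjTranspose_apply]
  fin_cases i <;> simp [-mul_eq_mul_left_iff, -mul_eq_mul_right_iff] <;> ring

theorem Bmat_apply_self (k : ℂ) (y : Vec2) (i : Fin 2) :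
    Bmat k y i i =
      (k ^ 2 - conj k ^ 2) / 2 * ![alph k y, conj (alph k y)] i * normSq (y i 0) := by
  rw [Bmat_apply, mul_assoc _ (y i 0), mul_conj]

theorem adjugateCompatible_Bmat {k : ℂ} {y : Vec2}
    (hy : k * (Complex.normSq (y 0 0) : ℂ) + conj k * (Complex.normSq (y 1 0) : ℂ) ≠ 0) :
    AdjugateCompatible k (conj k) (Bmat k y) (Bmat k y)ᴴ := by
  have h : alph k y * (k * normSq (y 0 0) + conj k * normSq (y 1 0)) = 1 := inv_mul_cancel₀ hy
  have hc := congrArg conj h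
  simp only [map_mul, map_add, map_one, conj_ofReal, Complex.conj_conj] at hc
  refine ⟨?_, ?_, ?_, ?_⟩
  · simp [Bmat_apply]
    ring
  · simp [Bmat_apply]
    ring
  · simp [Bmat_apply_self]
    linear_combination (k ^ 2 - conj k ^ 2) * hc
  · simp [Bmat_apply_self]
    linear_combination (k ^ 2 - conj k ^ 2) * h

theorem sigma2_D_transpose (k : ℂ) (y : Vec2)
    (hy : k * (Complex.normSq (y 0 0) : ℂ) + conj k * (Complex.normSq (y 1 0) : ℂ) ≠ 0) :
    ∀ lam : ℂ, lam ^ 2 ≠ k ^ 2 → lam ^ 2 ≠ (conj k) ^ 2 →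
      sigma2 * (Dfun k y lam)ᵀ * sigma2
        = ((lam ^ 2 - (conj k) ^ 2) / (lam ^ 2 - k ^ 2)) • Efun k y lam := by
  intro lam hk hκ
  have hD : Dfun k y lam = dressingFactor k (Bmat k y) lam := rfl
  have hE : Efun k y lam = dressingFactor (conj k) (Bmat k y)ᴴ lam := rfl
  rw [sigma2_mul_transpose_mul_sigma2, hD, hE]
  exact adjugate_dressingFactor hk hκ (adjugateCompatible_Bmat hy)
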